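/- Let q be an odd prime power, d ≥ 2, and E ⊆ 𝔽_q^d with |E| > 12·q^{(d+3)/2}. Suppose t_1, …, t_k ∈ 𝔽_q are all nonzero and k < |E|/(12q). Then ν_k(t⃗) > 0; that is, there exist x ∈ E and pairwise distinct x^1, …, x^k ∈ E with ‖x − x^i‖ = t_i for all 1 ≤ i ≤ k. -/

import Mathlib

/-!
For `x` let `ν_x(s)` be the number of points of `E` at squared distance `s` from `x`. Since `q` is
odd, the points equidistant from two distinct `y ≠ y'` form an affine hyperplane, so the energy
`∑_{x,s} ν_x(s)²` is at most `|E| q^d + |E|² q^(d-1)`, and since `∑_s ν_x(s) = |E|` the variance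
`∑_{x,s} (q ν_x(s) - |E|)²` is at most `q^(d+2) |E|`. If every `x ∈ E` had a sphere carrying at most
`k` points of `E`, each would contribute at least `(|E| - qk)²`, forcing `(|E| - qk)² ≤ q^(d+2)`,
which the size assumptions exclude. So some `x ∈ E` has more than `k` points of `E` on every sphere
around it, and Hall's theorem picks distinct `y i` on the spheres of radii `t i`.
-/

open Finset

theorem AddMonoidHom.card_mul_card_fiber {G H : Type*} [AddCommGroup G] [AddCommGroup H]
    [Fintype G] [Fintype H] [DecidableEq H] (f : G →+ H) (hf : Function.Surjective f) (b : H) :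
    Fintype.card H * #{x | f x = b} = Fintype.card G := by
  have translate : ∀ c, #{x | f x = c} = #{x | f x = b} := by
    intro c
    obtain ⟨x₀, hx₀⟩ := hf (c - b)
    refine card_nbij' (· - x₀) (· + x₀) ?_ ?_ ?_ ?_ <;> intro x hx <;> simp_all
  calc Fintype.card H * #{x | f x = b} = ∑ c, #{x | f x = c} := by simp [translate]
    _ = Fintype.card G := (card_eq_sum_card_fiberwise (by simp)).symm

theorem Finset.sum_card_fiber_sq {α β : Type*} [Fintype β] [DecidableEq β]
    (s : Finset α) (g : α → β) :
    ∑ c, #{z ∈ s | g z = c} ^ 2 = ∑ y ∈ s, #{z ∈ s | g z = g y} := by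
  rw [← sum_fiberwise s g]
  refine sum_congr rfl fun c _ => ?_
  rw [sq, ← smul_eq_mul, ← sum_const]
  exact sum_congr rfl fun y hy => by rw [(mem_filter.1 hy).2]

theorem Finset.exists_injective_forall_mem_of_card_le {ι α : Type*} [Fintype ι] [DecidableEq α]
    (S : ι → Finset α) (hS : ∀ i, Fintype.card ι ≤ #(S i)) :
    ∃ f : ι → α, Function.Injective f ∧ ∀ i, f i ∈ S i := by
  refine (all_card_le_biUnion_card_iff_exists_injective S).1 fun s => ?_
  rcases s.eq_empty_or_nonempty with rfl | ⟨i, hi⟩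
  · simp
  · calc #s ≤ Fintype.card ι := card_le_univ s
      _ ≤ #(S i) := hS i
      _ ≤ #(s.biUnion S) := card_le_card (subset_biUnion_of_mem S hi)

section

variable {ι F : Type*} [Fintype ι] [Field F]

def sqDist (x y : ι → F) : F := ∑ j, (x j - y j) ^ 2

theorem sqDist_eq_sqDist_iff (x y y' : ι → F) :
    sqDist x y = sqDist x y' ↔ ((2 : F) • (y' - y)) ⬝ᵥ x = y' ⬝ᵥ y' - y ⬝ᵥ y := by
  rw [← sub_eq_zero, ← sub_eq_zero (a := _ ⬝ᵥ x), sqDist, sqDist, ← sum_sub_distrib]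
  simp only [dotProduct, ← sum_sub_distrib]
  refine Eq.congr_left (sum_congr rfl fun j _ => ?_)
  simp only [Pi.smul_apply, Pi.sub_apply, smul_eq_mul]
  ring

variable [Fintype F] [DecidableEq F] [DecidableEq ι]

theorem card_mul_card_dotProduct_eq {a : ι → F} (ha : a ≠ 0) (b : F) :
    Fintype.card F * #{x | a ⬝ᵥ x = b} = Fintype.card F ^ Fintype.card ι := by
  obtain ⟨j, hj⟩ := Function.ne_iff.1 ha
  have hsurj : Function.Surjective (AddMonoidHom.mk' (a ⬝ᵥ ·) (dotProduct_add a)) := fun c =>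
    ⟨Pi.single j (c / a j), by simp [dotProduct_single, mul_div_cancel₀ _ hj]⟩
  rw [← Fintype.card_fun]
  exact AddMonoidHom.card_mul_card_fiber _ hsurj b

theorem card_mul_card_sqDist_eq_sqDist (h2 : (2 : F) ≠ 0) {y y' : ι → F} (hy : y ≠ y') :
    Fintype.card F * #{x | sqDist x y = sqDist x y'} = Fintype.card F ^ Fintype.card ι := by
  simp_rw [sqDist_eq_sqDist_iff]
  refine card_mul_card_dotProduct_eq ?_ _
  rw [Ne, smul_eq_zero, sub_eq_zero, not_or]
  exact ⟨h2, Ne.symm hy⟩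

theorem card_mul_sum_sum_card_sqDist_sq_le (h2 : (2 : F) ≠ 0) (E : Finset (ι → F)) :
    Fintype.card F * ∑ x : ι → F, ∑ s, #{z ∈ E | sqDist x z = s} ^ 2
      ≤ #E * Fintype.card F ^ (Fintype.card ι + 1) + #E ^ 2 * Fintype.card F ^ Fintype.card ι := by
  set q := Fintype.card F
  set n := Fintype.card ι
  have pair_bound : ∀ y z : ι → F,
      q * #{x | sqDist x z = sqDist x y} ≤ (if y = z then q ^ (n + 1) else 0) + q ^ n := by
    intro y z
    by_cases hyz : y = z
    · simp [hyz, q, n, pow_succ']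
    · rw [if_neg hyz, zero_add]
      exact (card_mul_card_sqDist_eq_sqDist h2 (Ne.symm hyz)).le
  calc q * ∑ x : ι → F, ∑ s, #{z ∈ E | sqDist x z = s} ^ 2
      = q * ∑ x : ι → F, ∑ y ∈ E, #{z ∈ E | sqDist x z = sqDist x y} := by
        simp only [sum_card_fiber_sq]
    _ = ∑ y ∈ E, ∑ z ∈ E, q * #{x | sqDist x z = sqDist x y} := by
        simp only [card_filter, mul_sum]
        rw [sum_comm]
        exact sum_congr rfl fun y _ => sum_comm
    _ ≤ ∑ y ∈ E, ∑ z ∈ E, ((if y = z then q ^ (n + 1) else 0) + q ^ n) :=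
        sum_le_sum fun y _ => sum_le_sum fun z _ => pair_bound y z
    _ = #E * q ^ (n + 1) + #E ^ 2 * q ^ n := by
        simp only [sum_add_distrib, sum_ite_eq, sum_const, smul_eq_mul, sum_ite_mem, inter_self]
        ring

theorem sum_sum_sq_mul_card_sqDist_sub_le (h2 : (2 : F) ≠ 0) (E : Finset (ι → F)) :
    ∑ x : ι → F, ∑ s, ((Fintype.card F : ℝ) * #{z ∈ E | sqDist x z = s} - #E) ^ 2
      ≤ (Fintype.card F : ℝ) ^ (Fintype.card ι + 2) * #E := by
  have sum_sphere : ∀ x, ∑ s, (#{z ∈ E | sqDist x z = s} : ℝ) = #E := fun x => by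
    exact_mod_cast (card_eq_sum_card_fiberwise (by simp)).symm
  have expand : ∀ x, ∑ s, ((Fintype.card F : ℝ) * #{z ∈ E | sqDist x z = s} - #E) ^ 2
      = (Fintype.card F : ℝ) ^ 2 * ∑ s, (#{z ∈ E | sqDist x z = s} : ℝ) ^ 2
        - Fintype.card F * #E ^ 2 := fun x => by
    simp only [sub_sq, mul_pow, sum_add_distrib, sum_sub_distrib, ← mul_sum, ← sum_mul,
      sum_sphere, sum_const, card_univ, nsmul_eq_mul]
    ring
  have energy : (Fintype.card F : ℝ) * ∑ x : ι → F, ∑ s, (#{z ∈ E | sqDist x z = s} : ℝ) ^ 2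
      ≤ #E * (Fintype.card F : ℝ) ^ (Fintype.card ι + 1)
        + #E ^ 2 * (Fintype.card F : ℝ) ^ Fintype.card ι := by
    exact_mod_cast card_mul_sum_sum_card_sqDist_sq_le h2 E
  rw [sum_congr rfl fun x _ => expand x, sum_sub_distrib, ← mul_sum, sum_const, card_univ,
    Fintype.card_fun, nsmul_eq_mul]
  push_cast
  linear_combination (Fintype.card F : ℝ) * energy

theorem exists_forall_lt_card_sqDist_eq (h2 : (2 : F) ≠ 0) (E : Finset (ι → F)) (k : ℕ)
    (hk : (Fintype.card F : ℝ) * k ≤ #E)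
    (hgap : (Fintype.card F : ℝ) ^ (Fintype.card ι + 2) < (#E - Fintype.card F * k) ^ 2) :
    ∃ x ∈ E, ∀ s, k < #{z ∈ E | sqDist x z = s} := by
  by_contra! hsmall
  have upper := sum_sum_sq_mul_card_sqDist_sub_le h2 E
  set q := Fintype.card F
  have lower : (#E : ℝ) * (#E - q * k) ^ 2
      ≤ ∑ x : ι → F, ∑ s, ((q : ℝ) * #{z ∈ E | sqDist x z = s} - #E) ^ 2 := by
    rw [← nsmul_eq_mul, ← sum_const]
    refine (sum_le_sum fun x hx => ?_).trans <| sum_le_sum_of_subset_of_nonneg (subset_univ E)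
      fun x _ _ => sum_nonneg fun s _ => sq_nonneg _
    obtain ⟨s, hs⟩ := hsmall x hx
    have hs' : (q : ℝ) * #{z ∈ E | sqDist x z = s} ≤ q * k := by gcongr
    calc ((#E : ℝ) - q * k) ^ 2 ≤ ((q : ℝ) * #{z ∈ E | sqDist x z = s} - #E) ^ 2 := by nlinarith
      _ ≤ _ := single_le_sum (f := fun s => ((q : ℝ) * #{z ∈ E | sqDist x z = s} - #E) ^ 2)
          (fun s _ => sq_nonneg _) (mem_univ s)
  have hE : (0 : ℝ) < #E := by
    have hq : (0 : ℝ) < q := Nat.cast_pos.2 Fintype.card_pos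
    have hgap_pos := (pow_pos hq _).trans hgap
    have hqk : (0 : ℝ) ≤ q * k := by positivity
    nlinarith
  nlinarith
end

theorem mul_le_and_pow_lt_sq_sub {q N k : ℝ} (d : ℕ) (hq : 1 ≤ q)
    (hN : 12 * q ^ (((d : ℝ) + 3) / 2) < N) (hk : k < N / (12 * q)) :
    q * k ≤ N ∧ q ^ (d + 2) < (N - q * k) ^ 2 := by
  have hq0 : 0 < q := by linarith
  have hqk : 12 * (q * k) < N := by rw [lt_div_iff₀ (by positivity)] at hk; linarith
  have hsq : (q ^ (((d : ℝ) + 3) / 2)) ^ 2 = q ^ (d + 2) * q := by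
    rw [← Real.rpow_mul_natCast hq0.le, ← pow_succ, ← Real.rpow_natCast]
    congr 1
    push_cast
    ring
  have hpos := Real.rpow_pos_of_pos hq0 (((d : ℝ) + 3) / 2)
  have hpow : 0 < q ^ (d + 2) := by positivity
  refine ⟨by nlinarith, ?_⟩
  have h11 : 11 * q ^ (((d : ℝ) + 3) / 2) < N - q * k := by linarith
  nlinarith [mul_le_mul_of_nonneg_left hq hpow.le]

theorem statement4_general {F : Type} [Field F] [Fintype F] [DecidableEq F]
    (q : ℕ) (hq : Fintype.card F = q) (hodd : Odd q)
    (d : ℕ) (k : ℕ)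
    (E : Finset (Fin d → F))
    (hE : 12 * (q : ℝ) ^ (((d : ℝ) + 3) / 2) < (E.card : ℝ))
    (hk : (k : ℝ) < (E.card : ℝ) / (12 * (q : ℝ)))
    (t : Fin k → F) :
    ∃ x ∈ E, ∃ y : Fin k → (Fin d → F),
      Function.Injective y ∧ (∀ i, y i ∈ E) ∧
        ∀ i : Fin k, ∑ j, (x j - y i j) ^ 2 = t i := by
  subst hq
  have h2 : (2 : F) ≠ 0 := Ring.two_ne_zero fun h => by
    simp [FiniteField.even_card_of_char_two h, Nat.odd_iff] at hodd
  obtain ⟨hqk, hgap⟩ :=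
    mul_le_and_pow_lt_sq_sub d (by exact_mod_cast Fintype.card_pos) hE hk
  obtain ⟨x, hxE, hsphere⟩ :=
    exists_forall_lt_card_sqDist_eq h2 E k hqk (by simpa using hgap)
  obtain ⟨y, hy, hyS⟩ := exists_injective_forall_mem_of_card_le
    (fun i => {z ∈ E | sqDist x z = t i}) (fun i => by simpa using (hsphere (t i)).le)
  exact ⟨x, hxE, y, hy, fun i => (mem_filter.1 (hyS i)).1, fun i => (mem_filter.1 (hyS i)).2⟩

theorem statement4 {F : Type} [Field F] [Fintype F] [DecidableEq F]
    (q : ℕ) (hq : Fintype.card F = q) (hodd : Odd q)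
    (d : ℕ) (hd : 2 ≤ d) (k : ℕ)
    (E : Finset (Fin d → F))
    (hE : 12 * (q : ℝ) ^ (((d : ℝ) + 3) / 2) < (E.card : ℝ))
    (hk : (k : ℝ) < (E.card : ℝ) / (12 * (q : ℝ)))
    (t : Fin k → F) (ht : ∀ i, t i ≠ 0) :
    ∃ x ∈ E, ∃ y : Fin k → (Fin d → F),
      Function.Injective y ∧ (∀ i, y i ∈ E) ∧
        ∀ i : Fin k, ∑ j, (x j - y i j) ^ 2 = t i :=
  statement4_general q hq hodd d k E hE hk t
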